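/- arXiv:math/0210401 — 4 statements merged into one kernel-verified Lean document; each statement's English description precedes it below -/
import Mathlib

section
/- Let p be a prime. Then p divides the denominator of the Bernoulli number B_{p-1} (written in lowest terms). -/
/-!
For `p = 2` this is `B₁ = -1/2`. For odd `p`, von Staudt–Clausen with `2k = p - 1` says that
`B_{p-1} + 1/p + ∑ 1/q` is an integer, the sum running over other primes `q`. Integers and the
`1/q` are `p`-integral, so if `B_{p-1}` were too, so would be `1/p`.
-/

open Finset

lemma Rat.padicValuation_sum_one_div_primes_le_one {p : ℕ} [Fact p.Prime] {s : Finset ℕ}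
    (hs : ∀ q ∈ s, q.Prime ∧ q ≠ p) :
    Rat.padicValuation p (∑ q ∈ s, (1 : ℚ) / q) ≤ 1 := by
  refine (Rat.padicValuation p).map_sum_le fun q hq ↦ Rat.padicValuation_le_one_iff.mpr ?_
  obtain ⟨hq, hqp⟩ := hs q hq
  rw [one_div, Rat.inv_natCast_den_of_pos hq.pos]
  exact fun h ↦ hqp ((Nat.prime_dvd_prime_iff_eq Fact.out hq).mp h).symm

theorem dvd_den_of_add_sum_one_div_primes_mem_range_intCast {p : ℕ} (hp : p.Prime)
    {s : Finset ℕ} (hs : ∀ q ∈ s, q.Prime) (hps : p ∈ s) {x : ℚ}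
    (hx : x + ∑ q ∈ s, (1 : ℚ) / q ∈ Set.range Int.cast) : p ∣ x.den := by
  have : Fact p.Prime := ⟨hp⟩
  obtain ⟨n, hn⟩ := hx
  have hinv : (1 : ℚ) / p = n - x - ∑ q ∈ s.erase p, (1 : ℚ) / q := by
    rw [hn, ← add_sum_erase s _ hps]
    ring
  by_contra hden
  have hvn : Rat.padicValuation p n ≤ 1 := Int.padicValuation_le_one p n
  have hvx := Rat.padicValuation_le_one_iff.mpr hden
  have hvrest := Rat.padicValuation_sum_one_div_primes_le_one (p := p) (s := s.erase p)
    fun q hq ↦ ⟨hs q (mem_of_mem_erase hq), ne_of_mem_erase hq⟩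
  have hinv_le :=
    (Rat.padicValuation p).map_sub_le ((Rat.padicValuation p).map_sub_le hvn hvx) hvrest
  rw [← hinv, Rat.padicValuation_le_one_iff, one_div, Rat.inv_natCast_den_of_pos hp.pos]
    at hinv_le
  exact hinv_le dvd_rfl

/-- Von Staudt–Clausen (part): for a prime `p`, `p` divides the denominator of the
Bernoulli number `B_{p-1}` (in lowest terms). -/
theorem prime_dvd_den_bernoulli (p : ℕ) (hp : p.Prime) :
    p ∣ (bernoulli (p - 1)).den := by
  obtain rfl | ⟨k, rfl⟩ := hp.eq_two_or_odd'
  · rw [show 2 - 1 = 1 from rfl, bernoulli_one]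
    norm_num
  rw [add_tsub_cancel_right]
  refine dvd_den_of_add_sum_one_div_primes_mem_range_intCast hp
    (fun q hq ↦ (mem_filter.mp hq).2.1) ?_ (Bernoulli.vonStaudt_clausen k)
  simp [hp]
end

section
/- Let p ≥ 5 be a prime. The submodule of functions with zero average in F_p[P¹(F_p)] is isomorphic as an SL₂(F_p)-representation to Symm^{p-1}(F_p²), the (p-1)-st symmetric power of the standard 2-dimensional representation. -/
/-!
Over `K = 𝔽_q`, a form of degree `q - 1` takes the same value at `v` and at `c • v` for every
`c ≠ 0`, so it defines a function on `ℙ¹(K)`; as its degree is less than `q`, it is determined by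
that function. Summing over `K² \ {0}` counts each point of `ℙ¹` exactly `q - 1 = -1` times, and
the sum over all of `K²` vanishes by Chevalley–Warning since `q - 1 < 2 (q - 1)`; so the values
have zero sum. Conversely `det (x, ·) ^ (q - 1)` restricts to the indicator of `ℙ¹ \ {x}`, and a
zero-sum `f` is the restriction of `-∑ₓ f x • det (x, ·) ^ (q - 1)`. Equivariance is the
substitution rule for evaluation.
-/

open Matrix Projectivization MvPolynomial

theorem mapCongr {K V : Type} [Field K] [AddCommGroup V] [Module K V]
    {f g : V →ₗ[K] V} (hf : Function.Injective f) (hg : Function.Injective g)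
    (h : f = g) (x : Projectivization K V) :
    Projectivization.map f hf x = Projectivization.map g hg x := by subst h; rfl

/-- The Möbius action of `SL₂(K)` on the projective line `P¹(K)`. -/
noncomputable instance sl2P1Action (K : Type) [Field K] :
    MulAction (Matrix.SpecialLinearGroup (Fin 2) K) (Projectivization K (Fin 2 → K)) where
  smul g x := Projectivization.map (Matrix.SpecialLinearGroup.toLin' g).toLinearMap
    (Matrix.SpecialLinearGroup.toLin' g).injective x
  one_smul x := by
    show Projectivization.map _ _ x = x
    rw [mapCongr _ (LinearEquiv.refl K (Fin 2 → K)).injective (by ext v; simp) x]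
    exact congrFun Projectivization.map_id x
  mul_smul a b x := by
    show Projectivization.map _ _ x = Projectivization.map _ _ (Projectivization.map _ _ x)
    rw [← Function.comp_apply (f := Projectivization.map _ _), ← Projectivization.map_comp]
    exact mapCongr _ _ (by ext v; simp [_root_.map_mul]) x

instance P1Finite (K V : Type) [Field K] [AddCommGroup V] [Module K V] [Finite V] :
    Finite (Projectivization K V) := by
  unfold Projectivization; infer_instance

/-- Evaluation of a polynomial at the chosen representative of a point of `P¹`. -/
noncomputable def evalMap (p : ℕ) [Fact p.Prime] :
    MvPolynomial (Fin 2) (ZMod p) →ₗ[ZMod p]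
      (Projectivization (ZMod p) (Fin 2 → ZMod p) → ZMod p) where
  toFun P := fun x => eval x.rep P
  map_add' := by intros; funext; simp
  map_smul' := by intros; funext; simp [MvPolynomial.smul_eval]

open scoped LinearAlgebra.Projectivization

namespace MvPolynomial

theorem eval_aeval {R σ τ : Type*} [CommSemiring R] (f : σ → MvPolynomial τ R) (v : τ → R)
    (P : MvPolynomial σ R) : eval v (aeval f P) = eval (fun i => eval v (f i)) P := by
  rw [aeval_eq_bind₁]
  exact eval₂Hom_bind₁ _ _ _ _

theorem eval_aeval_linear {R σ : Type*} [CommSemiring R] [Fintype σ] (A : Matrix σ σ R)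
    (v : σ → R) (P : MvPolynomial σ R) :
    eval v (aeval (fun i => ∑ j, C (A i j) * X j) P) = eval (A *ᵥ v) P := by
  rw [eval_aeval]
  congr 2 with i
  simp [Matrix.mulVec, dotProduct]

namespace IsHomogeneous

section Scaling

variable {R σ : Type*} [CommSemiring R] [Fintype σ] {F : MvPolynomial σ R} {n : ℕ}

theorem eval_smul (hF : F.IsHomogeneous n) (c : R) (v : σ → R) :
    eval (c • v) F = c ^ n * eval v F := by
  rw [eval_eq', eval_eq', Finset.mul_sum]
  refine Finset.sum_congr rfl fun e he => ?_
  have hdeg : ∑ i, e i = n := by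
    rw [← Finsupp.degree_eq_sum, Finsupp.degree_eq_weight_one]
    exact hF (mem_support_iff.mp he)
  simp only [Pi.smul_apply, smul_eq_mul, mul_pow, Finset.prod_mul_distrib,
    Finset.prod_pow_eq_pow_sum, hdeg]
  ring

theorem eval_zero (hF : F.IsHomogeneous n) (hn : n ≠ 0) : eval 0 F = 0 := by
  simpa [zero_pow hn] using hF.eval_smul 0 0

end Scaling

variable {K σ : Type*} [Field K] [Fintype K] [Fintype σ] {F G : MvPolynomial σ K}

theorem eval_smul_of_ne_zero (hF : F.IsHomogeneous (Fintype.card K - 1)) {c : K} (hc : c ≠ 0)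
    (v : σ → K) : eval (c • v) F = eval v F := by
  rw [hF.eval_smul, FiniteField.pow_card_sub_one_eq_one c hc, one_mul]

theorem eval_mk_rep (hF : F.IsHomogeneous (Fintype.card K - 1)) (v : σ → K) (hv : v ≠ 0) :
    eval (mk K v hv).rep F = eval v F := by
  obtain ⟨a, ha⟩ := exists_smul_eq_mk_rep K v hv
  rw [← ha, Units.smul_def, hF.eval_smul_of_ne_zero a.ne_zero]

theorem eval_zero_of_card_sub_one (hF : F.IsHomogeneous (Fintype.card K - 1)) : eval 0 F = 0 :=
  hF.eval_zero (Nat.sub_ne_zero_of_lt Fintype.one_lt_card)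

theorem eq_of_eval_rep_eq (hF : F.IsHomogeneous (Fintype.card K - 1))
    (hG : G.IsHomogeneous (Fintype.card K - 1))
    (h : ∀ x : ℙ K (σ → K), eval x.rep F = eval x.rep G) : F = G := by
  refine hF.funext_of_le_card hG (fun v => ?_) ?_
  · by_cases hv : v = 0
    · rw [hv, hF.eval_zero_of_card_sub_one, hG.eval_zero_of_card_sub_one]
    · rw [← hF.eval_mk_rep v hv, ← hG.eval_mk_rep v hv, h]
  · rw [Cardinal.mk_fintype]
    exact_mod_cast Nat.sub_le _ 1

/-- Every nonzero vector is `c • x.rep` for exactly `q - 1` pairs `(x, c)`, and `q - 1 = -1`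
in `K`. -/
theorem sum_eval_eq_neg_sum_eval_rep [DecidableEq σ] (hF : F.IsHomogeneous (Fintype.card K - 1))
    [Fintype (ℙ K (σ → K))] :
    ∑ v, eval v F = -∑ x : ℙ K (σ → K), eval x.rep F := by
  classical
  calc ∑ v, eval v F = ∑ v : {v : σ → K // v ≠ 0}, eval v.1 F :=
        (Finset.sum_erase (f := fun v => eval v F) _ hF.eval_zero_of_card_sub_one).symm.trans
          (Finset.sum_subtype _ (by simp) _)
    _ = ∑ y : ℙ K (σ → K) × Kˣ, eval y.1.rep F :=
        Fintype.sum_equiv (nonZeroEquivProjectivizationProdUnits K (σ → K)) _ _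
          fun v => (hF.eval_mk_rep v.1 v.2).symm
    _ = -∑ x : ℙ K (σ → K), eval x.rep F := by
        rw [Fintype.sum_prod_type]
        simp only [Finset.sum_const, Finset.card_univ, Fintype.card_units, nsmul_eq_mul]
        rw [Nat.cast_sub Fintype.card_pos, FiniteField.cast_card_eq_zero]
        simp [← Finset.sum_neg_distrib]

theorem sum_eval_rep_eq_zero [DecidableEq σ] (hF : F.IsHomogeneous (Fintype.card K - 1))
    (hσ : 2 ≤ Fintype.card σ) [Fintype (ℙ K (σ → K))] :
    ∑ x : ℙ K (σ → K), eval x.rep F = 0 := by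
  rw [← neg_eq_zero, ← hF.sum_eval_eq_neg_sum_eval_rep]
  refine sum_eval_eq_zero F (hF.totalDegree_le.trans_lt ?_)
  have := Nat.mul_le_mul_left (Fintype.card K - 1) hσ
  have := Nat.sub_ne_zero_of_lt (Fintype.one_lt_card (α := K))
  omega

theorem eval_rep_smul {F : MvPolynomial (Fin 2) K} (hF : F.IsHomogeneous (Fintype.card K - 1))
    (g : SpecialLinearGroup (Fin 2) K) (x : ℙ K (Fin 2 → K)) :
    eval (g • x).rep F = eval ((g : Matrix (Fin 2) (Fin 2) K) *ᵥ x.rep) F := by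
  conv_lhs => rw [← x.mk_rep]
  exact hF.eval_mk_rep _ _

end IsHomogeneous

end MvPolynomial

section ProjectiveLine

variable {K : Type*} [Field K]

theorem Projectivization.det_rep_ne_zero_iff (x y : ℙ K (Fin 2 → K)) :
    (Matrix.of ![x.rep, y.rep]).det ≠ 0 ↔ x ≠ y := by
  rw [← independent_pair_iff_ne, independent_iff, ← isUnit_iff_ne_zero,
    ← Matrix.isUnit_iff_isUnit_det, ← Matrix.linearIndependent_rows_iff_isUnit]
  have : Projectivization.rep ∘ ![x, y] = ![x.rep, y.rep] := by
    ext i : 1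
    fin_cases i <;> rfl
  rw [this]
  rfl

variable [Fintype K]

noncomputable def complIndicatorPoly (x : ℙ K (Fin 2 → K)) : MvPolynomial (Fin 2) K :=
  (C (x.rep 0) * X 1 - C (x.rep 1) * X 0) ^ (Fintype.card K - 1)

theorem isHomogeneous_complIndicatorPoly (x : ℙ K (Fin 2 → K)) :
    (complIndicatorPoly x).IsHomogeneous (Fintype.card K - 1) := by
  have h : (C (x.rep 0) * X 1 - C (x.rep 1) * X 0 : MvPolynomial (Fin 2) K).IsHomogeneous 1 :=
    ((isHomogeneous_X _ _).C_mul _).sub ((isHomogeneous_X _ _).C_mul _)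
  unfold complIndicatorPoly
  simpa using h.pow (Fintype.card K - 1)

theorem eval_rep_complIndicatorPoly (x y : ℙ K (Fin 2 → K)) :
    eval y.rep (complIndicatorPoly x) =
      (Matrix.of ![x.rep, y.rep]).det ^ (Fintype.card K - 1) := by
  simp [complIndicatorPoly, Matrix.det_fin_two]

theorem eval_rep_complIndicatorPoly_self (x : ℙ K (Fin 2 → K)) :
    eval x.rep (complIndicatorPoly x) = 0 := by
  simp [complIndicatorPoly, mul_comm, Nat.sub_ne_zero_of_lt Fintype.one_lt_card]

theorem eval_rep_complIndicatorPoly_of_ne {x y : ℙ K (Fin 2 → K)} (h : x ≠ y) :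
    eval y.rep (complIndicatorPoly x) = 1 := by
  rw [eval_rep_complIndicatorPoly]
  exact FiniteField.pow_card_sub_one_eq_one _ ((det_rep_ne_zero_iff x y).mpr h)

theorem exists_isHomogeneous_eval_rep_eq [Fintype (ℙ K (Fin 2 → K))] (f : ℙ K (Fin 2 → K) → K)
    (hf : ∑ x, f x = 0) :
    ∃ F : MvPolynomial (Fin 2) K,
      F.IsHomogeneous (Fintype.card K - 1) ∧ ∀ y, eval y.rep F = f y := by
  classical
  refine ⟨-∑ x, f x • complIndicatorPoly x, ?_, fun y => ?_⟩
  · refine (mem_homogeneousSubmodule _ _).mp (Submodule.neg_mem _ (Submodule.sum_mem _ ?_))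
    exact fun x _ => Submodule.smul_mem _ _ (isHomogeneous_complIndicatorPoly x)
  · have hterm (x) : f x * eval y.rep (complIndicatorPoly x) = f x - if x = y then f x else 0 := by
      split_ifs with h
      · rw [h, eval_rep_complIndicatorPoly_self, mul_zero, sub_self]
      · rw [eval_rep_complIndicatorPoly_of_ne h, mul_one, sub_zero]
    simp [hterm, Finset.sum_sub_distrib, hf]

end ProjectiveLine

/-- For a prime `p ≥ 5`, the submodule of zero-sum functions in `F_p[P¹(F_p)]`
is isomorphic, as an `SL₂(F_p)`-representation, to `Symm^{p-1}(F_p²)`, the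
homogeneous polynomials of degree `p-1`: evaluation at representatives gives an
injective equivariant linear map from `Symm^{p-1}(F_p²)` with image exactly the
zero-sum functions. -/
theorem zero_sum_iso_symm (p : ℕ) [Fact p.Prime] :
    letI P1 := Projectivization (ZMod p) (Fin 2 → ZMod p)
    letI : Fintype P1 := Fintype.ofFinite P1
    letI Sym := homogeneousSubmodule (Fin 2) (ZMod p) (p - 1)
    letI φ : Sym →ₗ[ZMod p] (P1 → ZMod p) := (evalMap p).comp Sym.subtype
    Function.Injective φ ∧
      LinearMap.range φ =
        LinearMap.ker
          ({ toFun := fun f : P1 → ZMod p => ∑ x, f x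
             map_add' := by intro f g; simp [Finset.sum_add_distrib]
             map_smul' := by intro c f; simp [Finset.mul_sum] } :
            (P1 → ZMod p) →ₗ[ZMod p] ZMod p) ∧
      ∀ (g : Matrix.SpecialLinearGroup (Fin 2) (ZMod p)) (P Q : Sym),
        (Q : MvPolynomial (Fin 2) (ZMod p)) =
          aeval (fun i => ∑ j,
            C ((g⁻¹ : Matrix.SpecialLinearGroup (Fin 2) (ZMod p)) i j) * X j) (P : MvPolynomial (Fin 2) (ZMod p)) →
        φ Q = fun x => φ P (g⁻¹ • x) := by
  let := Fintype.ofFinite (ℙ (ZMod p) (Fin 2 → ZMod p))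
  have hq : Fintype.card (ZMod p) - 1 = p - 1 := by rw [ZMod.card]
  have hom (P : homogeneousSubmodule (Fin 2) (ZMod p) (p - 1)) :
      (P : MvPolynomial (Fin 2) (ZMod p)).IsHomogeneous (Fintype.card (ZMod p) - 1) := by
    rw [hq]; exact P.2
  refine ⟨fun P Q h => Subtype.ext ((hom P).eq_of_eval_rep_eq (hom Q) (congrFun h)), ?_, ?_⟩
  · ext f
    constructor
    · rintro ⟨P, rfl⟩
      exact (hom P).sum_eval_rep_eq_zero (by simp)
    · intro hf
      obtain ⟨F, hF, hFf⟩ := exists_isHomogeneous_eval_rep_eq f hf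
      exact ⟨⟨F, by rw [← hq]; exact hF⟩, funext hFf⟩
  · intro g P Q hQ
    funext x
    show eval x.rep (Q : MvPolynomial (Fin 2) (ZMod p)) = eval (g⁻¹ • x).rep P
    rw [hQ, eval_aeval_linear]
    exact ((hom P).eval_rep_smul g⁻¹ x).symm
end

section
/- Let p be a prime. The SL₂(F_p)-representation Symm^{p-1}(F_p²) on homogeneous polynomials of degree p-1 in two variables over F_p is irreducible. -/
open MvPolynomial Finsupp

section Helpers
variable {K : Type*} [CommRing K]

lemma single2_add_apply0 (a b : ℕ) :
    (Finsupp.single (0 : Fin 2) a + Finsupp.single 1 b : Fin 2 →₀ ℕ) 0 = a := by simp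

lemma single2_add_apply1 (a b : ℕ) :
    (Finsupp.single (0 : Fin 2) a + Finsupp.single 1 b : Fin 2 →₀ ℕ) 1 = b := by simp

lemma fin2_finsupp_eq (m : Fin 2 →₀ ℕ) :
    m = Finsupp.single 0 (m 0) + Finsupp.single 1 (m 1) := by
  ext i
  fin_cases i
  · simp [single2_add_apply0]
  · simp [single2_add_apply1]

lemma single2_inj {a b u v : ℕ} :
    Finsupp.single (0 : Fin 2) a + Finsupp.single 1 b = Finsupp.single 0 u + Finsupp.single 1 v
      ↔ a = u ∧ b = v := by
  constructor
  · intro h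
    refine ⟨?_, ?_⟩
    · have h0 := single2_add_apply0 a b
      rw [h, single2_add_apply0] at h0; exact h0.symm
    · have h1 := single2_add_apply1 a b
      rw [h, single2_add_apply1] at h1; exact h1.symm
  · rintro ⟨rfl, rfl⟩; rfl

lemma mono_eq (c : K) (a b : ℕ) :
    C c * X (0 : Fin 2) ^ a * X 1 ^ b
      = monomial (Finsupp.single 0 a + Finsupp.single 1 b) c := by
  rw [C_apply, X_pow_eq_monomial, X_pow_eq_monomial, monomial_mul, monomial_mul]
  simp

lemma hom_apply_add {f : MvPolynomial (Fin 2) K} {n : ℕ} (hf : f.IsHomogeneous n)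
    {m : Fin 2 →₀ ℕ} (hm : m ∈ f.support) : m 0 + m 1 = n := by
  have := hf (MvPolynomial.mem_support_iff.mp hm)
  rw [← this, Finsupp.weight_apply, Finsupp.sum_fintype]
  · simp [Fin.sum_univ_two]
  · simp

end Helpers

section Phi
variable {K : Type*} [CommRing K]

noncomputable def phi : MvPolynomial (Fin 2) K →ₐ[K] MvPolynomial (Fin 2) K :=
  aeval ![X 0 - X 1, X 1]

lemma aeval_isHomogeneous {s : Fin 2 → MvPolynomial (Fin 2) K}
    (hs : ∀ i, (s i).IsHomogeneous 1) {f : MvPolynomial (Fin 2) K} {n : ℕ}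
    (hf : f.IsHomogeneous n) : (aeval s f).IsHomogeneous n := by
  rw [← mem_homogeneousSubmodule] at *
  rw [f.as_sum, map_sum]
  apply Submodule.sum_mem
  intro m hm
  rw [aeval_monomial, mem_homogeneousSubmodule]
  have hmn : m 0 + m 1 = n := hom_apply_add (by rwa [mem_homogeneousSubmodule] at hf) hm
  have key : (m.prod fun i e => s i ^ e).IsHomogeneous (m 0 + m 1) := by
    rw [Finsupp.prod_fintype _ _ (by intro i; exact pow_zero _), Fin.prod_univ_two]
    have := ((hs 0).pow (m 0)).mul ((hs 1).pow (m 1))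
    simpa using this
  rw [hmn] at key
  have := (isHomogeneous_C (σ := Fin 2) (coeff m f)).mul key
  simpa [algebraMap_eq] using this

lemma phi_monomial (a b : ℕ) (c : K) :
    phi (monomial (Finsupp.single 0 a + Finsupp.single 1 b) c)
      = C c * (X 0 - X 1) ^ a * X 1 ^ b := by
  rw [phi, aeval_monomial, Finsupp.prod_fintype _ _ (by intro i; exact pow_zero _),
    Fin.prod_univ_two, single2_add_apply0, single2_add_apply1]
  simp [algebraMap_eq, mul_assoc]

lemma coeff_phi_monomial (a b u v : ℕ) (c : K) :
    coeff (Finsupp.single 0 u + Finsupp.single 1 v)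
        (phi (monomial (Finsupp.single 0 a + Finsupp.single 1 b) c))
      = if u ≤ a ∧ u + v = a + b then c * (-1) ^ (a - u) * (a.choose u : K) else 0 := by
  rw [phi_monomial, sub_pow, Finset.mul_sum, Finset.sum_mul]
  have hterm : ∀ j, C c * ((-1 : MvPolynomial (Fin 2) K) ^ (j + a) * X 0 ^ j
        * X 1 ^ (a - j) * (a.choose j : MvPolynomial (Fin 2) K)) * X 1 ^ b
      = monomial (Finsupp.single 0 j + Finsupp.single 1 (a - j + b))
          (c * (-1) ^ (j + a) * (a.choose j : K)) := by
    intro j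
    rw [← mono_eq]
    simp only [map_mul, map_pow, map_neg, map_one, map_natCast, pow_add]
    ring
  rw [Finset.sum_congr rfl (fun j _ => hterm j)]
  simp only [coeff_sum, coeff_monomial]
  rw [Finset.sum_eq_single u]
  · by_cases hv : a - u + b = v
    · rw [if_pos (single2_inj.mpr ⟨rfl, hv⟩)]
      by_cases hu : u ≤ a
      · rw [if_pos ⟨hu, by omega⟩]
        have hpw : (-1 : K) ^ (u + a) = (-1) ^ (a - u) := by
          rw [show u + a = (a - u) + 2 * u by omega, pow_add]
          simp [pow_mul]
        rw [hpw]
      · rw [if_neg (by rintro ⟨h1, h2⟩; omega), Nat.choose_eq_zero_of_lt (by omega)]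
        simp
    · rw [if_neg (by rw [single2_inj]; tauto), if_neg (by rintro ⟨h1, h2⟩; omega)]
  · intro j hj hne
    rw [if_neg (by rw [single2_inj]; tauto)]
  · intro hus
    have hu : a < u := by by_contra h; exact hus (Finset.mem_range.mpr (by omega))
    by_cases hv : a - u + b = v
    · rw [if_pos (single2_inj.mpr ⟨rfl, hv⟩), Nat.choose_eq_zero_of_lt hu]
      simp
    · rw [if_neg (by rw [single2_inj]; tauto)]

lemma coeff_phi (f : MvPolynomial (Fin 2) K) (u v : ℕ) :
    coeff (Finsupp.single 0 u + Finsupp.single 1 v) (phi f)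
      = ∑ e ∈ f.support,
          (if u ≤ e 0 ∧ u + v = e 0 + e 1
            then coeff e f * (-1) ^ (e 0 - u) * ((e 0).choose u : K) else 0) := by
  conv_lhs => rw [f.as_sum, map_sum, coeff_sum]
  refine Finset.sum_congr rfl fun e he => ?_
  conv_lhs => rw [fin2_finsupp_eq e]
  rw [coeff_phi_monomial, ← fin2_finsupp_eq e]

lemma coeff_phi_high {f : MvPolynomial (Fin 2) K} {u : ℕ}
    (hD : ∀ e ∈ f.support, (e : Fin 2 →₀ ℕ) 0 ≤ u) (v : ℕ) :
    coeff (Finsupp.single 0 u + Finsupp.single 1 v) (phi f)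
      = coeff (Finsupp.single 0 u + Finsupp.single 1 v) f := by
  rw [coeff_phi]
  rw [Finset.sum_eq_single (Finsupp.single 0 u + Finsupp.single 1 v)]
  · rw [single2_add_apply0, single2_add_apply1, if_pos ⟨le_refl u, rfl⟩]
    simp
  · intro e he hne
    rw [if_neg]
    rintro ⟨h1, h2⟩
    have h3 : e 0 = u := le_antisymm (hD e he) h1
    have h4 : e 1 = v := by omega
    exact hne (by rw [fin2_finsupp_eq e, h3, h4])
  · intro h
    rw [single2_add_apply0, single2_add_apply1, if_pos ⟨le_refl u, rfl⟩,
      MvPolynomial.notMem_support_iff.mp h]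
    simp

lemma coeff_phi_step {f : MvPolynomial (Fin 2) K} {n d : ℕ} (hf : f.IsHomogeneous n)
    (hD : ∀ e ∈ f.support, (e : Fin 2 →₀ ℕ) 0 ≤ d) (hd1 : 1 ≤ d) (hdn : d ≤ n) :
    coeff (Finsupp.single 0 (d-1) + Finsupp.single 1 (n-d+1)) (phi f)
      = coeff (Finsupp.single 0 (d-1) + Finsupp.single 1 (n-d+1)) f
        - (d : K) * coeff (Finsupp.single 0 d + Finsupp.single 1 (n-d)) f := by
  set E1 : Fin 2 →₀ ℕ := Finsupp.single 0 (d-1) + Finsupp.single 1 (n-d+1) with hE1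
  set E2 : Fin 2 →₀ ℕ := Finsupp.single 0 d + Finsupp.single 1 (n-d) with hE2
  have hne : E1 ≠ E2 := by
    rw [hE1, hE2]
    intro h
    have := (single2_inj.mp h).1
    omega
  rw [coeff_phi]
  set h : (Fin 2 →₀ ℕ) → K := fun e =>
    if (d-1) ≤ e 0 ∧ (d-1) + (n-d+1) = e 0 + e 1
      then coeff e f * (-1) ^ (e 0 - (d-1)) * ((e 0).choose (d-1) : K) else 0 with hh
  have h0 : ∀ e, e ∉ f.support → h e = 0 := by
    intro e he
    rw [hh]
    simp only [MvPolynomial.notMem_support_iff.mp he, zero_mul, ite_self]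
  have hA : ∑ e ∈ f.support, h e = ∑ e ∈ f.support ∪ {E1, E2}, h e :=
    Finset.sum_subset Finset.subset_union_left (fun x _ hx => h0 x hx)
  have hkey : ∀ e ∈ f.support, e ≠ E1 → e ≠ E2 → h e = 0 := by
    intro e he hne1 hne2
    rw [hh]
    dsimp only
    rw [if_neg]
    rintro ⟨h1, h2⟩
    have h3 : e 0 + e 1 = n := hom_apply_add hf he
    have h4 : e 0 ≤ d := hD e he
    have h5 : e 0 = d - 1 ∨ e 0 = d := by omega
    rcases h5 with h5 | h5
    · exact hne1 (by rw [fin2_finsupp_eq e, h5, show e 1 = n - d + 1 by omega])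
    · exact hne2 (by rw [fin2_finsupp_eq e, h5, show e 1 = n - d by omega])
  have hB : ∑ e ∈ ({E1, E2} : Finset (Fin 2 →₀ ℕ)), h e = ∑ e ∈ f.support ∪ {E1, E2}, h e := by
    refine Finset.sum_subset Finset.subset_union_right (fun x hx hnx => ?_)
    have hxs : x ∈ f.support := by
      rcases Finset.mem_union.mp hx with h | h
      · exact h
      · exact absurd h hnx
    refine hkey x hxs ?_ ?_ <;> intro hcon <;> exact hnx (by simp [hcon])
  rw [hA, ← hB, Finset.sum_pair hne]
  have hval1 : h E1 = coeff E1 f := by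
    rw [hh]
    dsimp only
    rw [hE1, single2_add_apply0, single2_add_apply1, if_pos ⟨le_refl _, rfl⟩, ← hE1]
    simp
  have hval2 : h E2 = -((d : K) * coeff E2 f) := by
    rw [hh]
    dsimp only
    rw [hE2, single2_add_apply0, single2_add_apply1, if_pos ⟨by omega, by omega⟩, ← hE2]
    rw [show d - (d - 1) = 1 by omega, pow_one]
    rw [show d.choose (d-1) = d by
      rw [Nat.choose_symm hd1, Nat.choose_one_right]]
    ring
  rw [hA, ← hB] at *
  rw [hval1, hval2]
  ring

end Phi

section Main

lemma inv_combo {K : Type*} [Field K] {m : ℕ} {N : Type*} [AddCommMonoid N] [Module K N]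
    (A : Matrix (Fin m) (Fin m) K) (hA : IsUnit A.det) (v w : Fin m → N)
    (hv : ∀ i, v i = ∑ k, A i k • w k) (j : Fin m) :
    w j = ∑ i, A⁻¹ j i • v i := by
  have h1 : A⁻¹ * A = 1 := Matrix.nonsing_inv_mul A hA
  calc w j = ∑ k, (1 : Matrix (Fin m) (Fin m) K) j k • w k := by
        rw [Finset.sum_eq_single j]
        · simp
        · intro k _ hk; simp [Matrix.one_apply, (Ne.symm hk)]
        · intro h; exact absurd (Finset.mem_univ j) h
    _ = ∑ k, ((A⁻¹ * A) j k) • w k := by rw [h1]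
    _ = ∑ k, ∑ i, (A⁻¹ j i * A i k) • w k := by
        refine Finset.sum_congr rfl fun k _ => ?_
        rw [Matrix.mul_apply, Finset.sum_smul]
    _ = ∑ i, ∑ k, (A⁻¹ j i * A i k) • w k := Finset.sum_comm
    _ = ∑ i, A⁻¹ j i • v i := by
        refine Finset.sum_congr rfl fun i _ => ?_
        rw [hv, Finset.smul_sum]
        refine Finset.sum_congr rfl fun k _ => ?_
        rw [mul_smul]

lemma choose_ne_zero_zmod (p : ℕ) [hp : Fact p.Prime] {k : ℕ} (hk : k ≤ p - 1) :
    (((p-1).choose k : ℕ) : ZMod p) ≠ 0 := by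
  rw [Ne, ZMod.natCast_eq_zero_iff]
  intro hdvd
  have h1 : (p-1).choose k * k.factorial * (p-1-k).factorial = (p-1).factorial :=
    Nat.choose_mul_factorial_mul_factorial hk
  have h2 : p ∣ (p-1).factorial := h1 ▸ Dvd.dvd.mul_right (hdvd.mul_right _) _
  have h3 := (Nat.Prime.dvd_factorial hp.out).mp h2
  have h4 := hp.out.two_le
  omega

end Main
section Descent

variable {p : ℕ} [hp : Fact p.Prime]
  {W : Submodule (ZMod p) (MvPolynomial (Fin 2) (ZMod p))}

lemma mem_W_subst
    (hinv : ∀ (g : Matrix.SpecialLinearGroup (Fin 2) (ZMod p)), ∀ P ∈ W,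
      aeval (fun i => ∑ j, C ((g⁻¹ : Matrix.SpecialLinearGroup (Fin 2) (ZMod p)) i j) * X j) P
        ∈ W)
    (M : Matrix.SpecialLinearGroup (Fin 2) (ZMod p)) {P : MvPolynomial (Fin 2) (ZMod p)}
    (hP : P ∈ W) :
    aeval (fun i => ∑ j, C ((M : Matrix (Fin 2) (Fin 2) (ZMod p)) i j) * X j) P ∈ W := by
  have := hinv M⁻¹ P hP
  rwa [inv_inv] at this

lemma phi_mem
    (hinv : ∀ (g : Matrix.SpecialLinearGroup (Fin 2) (ZMod p)), ∀ P ∈ W,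
      aeval (fun i => ∑ j, C ((g⁻¹ : Matrix.SpecialLinearGroup (Fin 2) (ZMod p)) i j) * X j) P
        ∈ W)
    {P : MvPolynomial (Fin 2) (ZMod p)} (hP : P ∈ W) : phi P ∈ W := by
  have hM : Matrix.det !![(1:ZMod p),-1;0,1] = 1 := by simp [Matrix.det_fin_two_of]
  have h := mem_W_subst hinv ⟨!![(1:ZMod p),-1;0,1], hM⟩ hP
  have harg : (fun i => ∑ j, C (((⟨!![(1:ZMod p),-1;0,1], hM⟩ :
        Matrix.SpecialLinearGroup (Fin 2) (ZMod p)) : Matrix (Fin 2) (Fin 2) (ZMod p)) i j) * X j)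
      = ![X 0 - X 1, X 1] := by
    funext i
    fin_cases i <;> simp [Fin.sum_univ_two] <;> ring
  rw [harg] at h
  rw [phi]
  exact h

lemma descent
    (hinv : ∀ (g : Matrix.SpecialLinearGroup (Fin 2) (ZMod p)), ∀ P ∈ W,
      aeval (fun i => ∑ j, C ((g⁻¹ : Matrix.SpecialLinearGroup (Fin 2) (ZMod p)) i j) * X j) P
        ∈ W)
    (d : ℕ) :
    ∀ f ∈ W, f.IsHomogeneous (p - 1) → f ≠ 0 → MvPolynomial.degreeOf 0 f ≤ d →
      (X 1 ^ (p - 1) : MvPolynomial (Fin 2) (ZMod p)) ∈ W := by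
  induction d with
  | zero =>
    intro f hfW hfh hf0 hdeg
    set n := p - 1 with hn
    have hall : ∀ m ∈ f.support, (m : Fin 2 →₀ ℕ) 0 = 0 := by
      intro m hm
      have := MvPolynomial.degreeOf_le_iff.mp hdeg m hm
      omega
    have hsupp : ∀ m ∈ f.support, m = Finsupp.single 1 n := by
      intro m hm
      have h1 : m 0 + m 1 = n := hom_apply_add hfh hm
      have h2 := hall m hm
      rw [fin2_finsupp_eq m, h2, Finsupp.single_zero, zero_add]
      rw [show m 1 = n by omega]
    have hc : coeff (Finsupp.single 1 n) f ≠ 0 := by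
      obtain ⟨m, hm⟩ := (MvPolynomial.ne_zero_iff.mp hf0)
      have hms : m ∈ f.support := MvPolynomial.mem_support_iff.mpr hm
      rw [← hsupp m hms]
      exact hm
    have hfeq : f = MvPolynomial.monomial (Finsupp.single 1 n) (coeff (Finsupp.single 1 n) f) := by
      ext m
      rw [MvPolynomial.coeff_monomial]
      by_cases hm : m ∈ f.support
      · rw [hsupp m hm, if_pos rfl]
      · rw [MvPolynomial.notMem_support_iff.mp hm]
        by_cases he : Finsupp.single (1 : Fin 2) n = m
        · rw [if_pos he]
          have hms : Finsupp.single (1 : Fin 2) n ∉ f.support := by rw [he]; exact hm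
          exact (MvPolynomial.notMem_support_iff.mp hms).symm
        · rw [if_neg he]
    obtain ⟨c, hcdef⟩ : ∃ c, coeff (Finsupp.single 1 n) f = c := ⟨_, rfl⟩
    rw [hcdef] at hc hfeq
    have hX : c⁻¹ • f = X 1 ^ n := by
      rw [hfeq, MvPolynomial.smul_monomial, smul_eq_mul, inv_mul_cancel₀ hc, X_pow_eq_monomial]
    rw [← hX]
    exact W.smul_mem _ hfW
  | succ d ih =>
    intro f hfW hfh hf0 hdeg
    by_cases hle : MvPolynomial.degreeOf 0 f ≤ d
    · exact ih f hfW hfh hf0 hle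
    set n := p - 1 with hn
    have hall : ∀ m ∈ f.support, (m : Fin 2 →₀ ℕ) 0 ≤ d + 1 :=
      fun m hm => MvPolynomial.degreeOf_le_iff.mp hdeg m hm
    obtain ⟨m0, hm0s, hm0⟩ : ∃ m ∈ f.support, ¬ (m : Fin 2 →₀ ℕ) 0 ≤ d := by
      by_contra hcon
      push_neg at hcon
      exact hle (MvPolynomial.degreeOf_le_iff.mpr hcon)
    have hm0d : (m0 : Fin 2 →₀ ℕ) 0 = d + 1 := by
      have := hall m0 hm0s; omega
    have hm0n : m0 0 + m0 1 = n := hom_apply_add hfh hm0s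
    have hdn : d + 1 ≤ n := by omega
    have hm0eq : m0 = Finsupp.single 0 (d+1) + Finsupp.single 1 (n - (d+1)) := by
      rw [fin2_finsupp_eq m0, hm0d, show m0 1 = n - (d+1) by omega]
    have hc : coeff (Finsupp.single 0 (d+1) + Finsupp.single 1 (n - (d+1))) f ≠ 0 := by
      rw [← hm0eq]; exact MvPolynomial.mem_support_iff.mp hm0s
    -- the new polynomial
    set f' := phi f - f with hf'
    have hf'W : f' ∈ W := W.sub_mem (phi_mem hinv hfW) hfW
    have hf'h : f'.IsHomogeneous n := by
      refine MvPolynomial.IsHomogeneous.sub ?_ hfh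
      refine aeval_isHomogeneous ?_ hfh
      intro i
      fin_cases i
      · exact (MvPolynomial.isHomogeneous_X _ 0).sub (MvPolynomial.isHomogeneous_X _ 1)
      · exact MvPolynomial.isHomogeneous_X _ 1
    have hstep := coeff_phi_step hfh hall (by omega) hdn
    have hcoeff : coeff (Finsupp.single 0 (d+1-1) + Finsupp.single 1 (n-(d+1)+1)) f'
        = -(((d+1 : ℕ) : ZMod p) * coeff (Finsupp.single 0 (d+1) + Finsupp.single 1 (n-(d+1))) f) := by
      rw [hf', MvPolynomial.coeff_sub, hstep]
      ring
    have hdp : ((d+1 : ℕ) : ZMod p) ≠ 0 := by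
      rw [Ne, ZMod.natCast_eq_zero_iff]
      intro hdvd
      have := Nat.le_of_dvd (by omega) hdvd
      have h2 := hp.out.two_le
      omega
    have hf'0 : f' ≠ 0 := by
      rw [MvPolynomial.ne_zero_iff]
      exact ⟨_, by rw [hcoeff]; exact neg_ne_zero.mpr (mul_ne_zero hdp hc)⟩
    have hf'deg : MvPolynomial.degreeOf 0 f' ≤ d := by
      rw [MvPolynomial.degreeOf_le_iff]
      intro m hm
      by_contra hgt
      push_neg at hgt
      have hmn : m 0 + m 1 = n := hom_apply_add hf'h hm
      have hcm : coeff m f' = 0 := by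
        rw [fin2_finsupp_eq m, hf', MvPolynomial.coeff_sub,
          coeff_phi_high (fun e he => le_trans (hall e he) (by omega)) (m 1), sub_self]
      exact MvPolynomial.mem_support_iff.mp hm hcm
    exact ih f' hf'W hf'h hf'0 hf'deg

end Descent
section Final

variable {p : ℕ} [hp : Fact p.Prime]
  {W : Submodule (ZMod p) (MvPolynomial (Fin 2) (ZMod p))}

lemma binom_row_mem
    (hinv : ∀ (g : Matrix.SpecialLinearGroup (Fin 2) (ZMod p)), ∀ P ∈ W,
      aeval (fun i => ∑ j, C ((g⁻¹ : Matrix.SpecialLinearGroup (Fin 2) (ZMod p)) i j) * X j) P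
        ∈ W)
    (hX : (X 1 ^ (p - 1) : MvPolynomial (Fin 2) (ZMod p)) ∈ W) :
    ∀ a : ℕ, a ≤ p - 1 → (X 0 ^ a * X 1 ^ (p - 1 - a) : MvPolynomial (Fin 2) (ZMod p)) ∈ W := by
  set n := p - 1 with hn
  have hnp : n + 1 = p := Nat.succ_pred_eq_of_pos hp.out.pos
  -- the elements (t x + y)^n are in W
  have hv_mem : ∀ t : ZMod p, (C t * X 0 + X 1 : MvPolynomial (Fin 2) (ZMod p)) ^ n ∈ W := by
    intro t
    have hM : Matrix.det !![(1:ZMod p),0;t,1] = 1 := by simp [Matrix.det_fin_two_of]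
    have h := mem_W_subst hinv ⟨!![(1:ZMod p),0;t,1], hM⟩ hX
    rw [map_pow, aeval_X] at h
    simpa [Fin.sum_univ_two] using h
  set x : Fin p → ZMod p := fun i => ((i : ℕ) : ZMod p) with hx
  set A := Matrix.vandermonde x with hA
  have hdet : IsUnit A.det := by
    rw [isUnit_iff_ne_zero, hA, Ne, Matrix.det_vandermonde_eq_zero_iff]
    rintro ⟨i, j, hij, hne⟩
    apply hne
    apply Fin.ext
    have hi := ZMod.val_cast_of_lt i.isLt
    have hj := ZMod.val_cast_of_lt j.isLt
    rw [hx] at hij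
    simp only at hij
    rw [← hi, ← hj, hij]
  set w : Fin p → MvPolynomial (Fin 2) (ZMod p) :=
    fun k => ((n.choose k : ℕ) : ZMod p) • (X 0 ^ (k : ℕ) * X 1 ^ (n - k)) with hw
  have hv : ∀ i, (C (x i) * X 0 + X 1 : MvPolynomial (Fin 2) (ZMod p)) ^ n
      = ∑ k, A i k • w k := by
    intro i
    rw [add_pow]
    rw [show n + 1 = p from hnp]
    rw [← Fin.sum_univ_eq_sum_range
      (fun m => (C (x i) * X 0) ^ m * X 1 ^ (n - m) * (n.choose m : MvPolynomial (Fin 2) (ZMod p)))]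
    refine Finset.sum_congr rfl fun k _ => ?_
    rw [hw, hA]
    simp only [Matrix.vandermonde_apply]
    rw [smul_smul, MvPolynomial.smul_eq_C_mul, mul_pow, ← map_pow]
    simp only [map_mul, map_natCast]
    ring
  have hwW : ∀ k : Fin p, w k ∈ W := by
    intro k
    rw [inv_combo A hdet _ w hv k]
    exact Submodule.sum_mem _ fun i _ => Submodule.smul_mem _ _ (hv_mem (x i))
  intro a ha
  have hap : a < p := by omega
  have := hwW ⟨a, hap⟩
  rw [hw] at this
  simp only at this
  have hc : ((n.choose a : ℕ) : ZMod p) ≠ 0 := choose_ne_zero_zmod p (hn ▸ ha)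
  have heq : (X 0 ^ a * X 1 ^ (n - a) : MvPolynomial (Fin 2) (ZMod p))
      = (((n.choose a : ℕ) : ZMod p))⁻¹ •
        (((n.choose a : ℕ) : ZMod p) • (X 0 ^ a * X 1 ^ (n - a))) := by
    rw [smul_smul, inv_mul_cancel₀ hc, one_smul]
  rw [heq]
  exact Submodule.smul_mem _ _ this

end Final

/-- For a prime `p`, the representation `Symm^{p-1}(F_p²)` of `SL₂(F_p)` on
homogeneous polynomials of degree `p - 1` in two variables over `F_p` (acting
by the linear substitution `(g·f)(v) = f(g⁻¹ v)`) is irreducible: every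
invariant subspace is `0` or everything. -/
theorem symm_p_minus_one_irreducible (p : ℕ) [Fact p.Prime]
    (W : Submodule (ZMod p) (MvPolynomial (Fin 2) (ZMod p)))
    (hle : W ≤ homogeneousSubmodule (Fin 2) (ZMod p) (p - 1))
    (hinv : ∀ (g : Matrix.SpecialLinearGroup (Fin 2) (ZMod p)), ∀ P ∈ W,
      aeval (fun i => ∑ j, C ((g⁻¹ : Matrix.SpecialLinearGroup (Fin 2) (ZMod p)) i j) * X j) P
        ∈ W) :
    W = ⊥ ∨ W = homogeneousSubmodule (Fin 2) (ZMod p) (p - 1) := by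
  by_cases hbot : W = ⊥
  · exact Or.inl hbot
  right
  obtain ⟨f, hfW, hf0⟩ := (Submodule.ne_bot_iff W).mp hbot
  have hfh : f.IsHomogeneous (p - 1) := (mem_homogeneousSubmodule _ _).mp (hle hfW)
  have hX := descent hinv (MvPolynomial.degreeOf 0 f) f hfW hfh hf0 le_rfl
  refine le_antisymm hle ?_
  intro g hg
  have hgh : g.IsHomogeneous (p - 1) := (mem_homogeneousSubmodule _ _).mp hg
  rw [g.as_sum]
  refine Submodule.sum_mem _ fun m hm => ?_
  have hmn : m 0 + m 1 = p - 1 := hom_apply_add hgh hm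
  have h1 : MvPolynomial.monomial m (coeff m g)
      = (coeff m g) • (X 0 ^ (m 0) * X 1 ^ ((p - 1) - m 0)) := by
    rw [MvPolynomial.smul_eq_C_mul, show (p - 1) - m 0 = m 1 by omega, ← mul_assoc, mono_eq,
      ← fin2_finsupp_eq m]
  rw [h1]
  exact Submodule.smul_mem _ _ (binom_row_mem hinv hX (m 0) (by omega))
end

section
/- Let p ≥ 5 be a prime. The dimension over F_p of the permutation module F_p[P¹(F_p)] equals p + 1, and it decomposes as the direct sum of a 1-dimensional trivial representation and an irreducible p-dimensional representation of SL₂(F_p). -/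
/-
The constants and the zero-sum functions are complementary because `#P¹(𝔽_p) = p + 1` is a unit
in `𝔽_p`, and both are plainly `SL₂`-stable. For irreducibility, let `W ≠ 0` be a stable subspace of
zero-sum functions. The shear `u = [[1, 1], [0, 1]]` has order `p`, so `u - 1` is nilpotent on `W`
and `W` contains a nonzero `u`-fixed `w`. As `u` fixes `∞` and translates the affine line
transitively, `w` is constant, say `c`, off `∞`; the zero-sum condition then forces `w ∞ = 0`, so
`W` contains `1 - δ_∞`. Transitivity of `SL₂` on `P¹` puts every `1 - δ_y` in `W`, and these span
the zero-sum functions.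
-/

open Matrix Projectivization

open scoped LinearAlgebra.Projectivization

theorem Module.End.exists_ne_zero_mem_apply_eq_self_of_pow_eq_one {K V : Type*} [Field K] {p : ℕ}
    [Fact p.Prime] [CharP K p] [AddCommGroup V] [Module K V] {σ : Module.End K V}
    (hσ : σ ^ p = 1) {W : Submodule K V} (hW : ∀ v ∈ W, σ v ∈ W) (hW0 : W ≠ ⊥) :
    ∃ v ∈ W, v ≠ 0 ∧ σ v = v := by
  have : Nontrivial W := Submodule.nontrivial_iff_ne_bot.mpr hW0
  have : CharP (Module.End K W) p := charP_of_injective_ringHom (algebraMap K _).injective p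
  set τ := σ.restrict hW
  have hτ : τ ^ p = 1 := by
    ext v
    simp [τ, Module.End.pow_restrict, hσ]
  set N : Module.End K W := τ - 1
  have hN : N ^ p = 0 := by
    rw [sub_pow_char_of_commute _ (Commute.one_right τ), hτ, one_pow, sub_self]
  have hker : ¬ Function.Injective N := fun hinj => by
    have := Module.End.coe_pow N p ▸ hinj.iterate p
    rw [hN] at this
    obtain ⟨v, w, hvw⟩ := exists_pair_ne W
    exact hvw (this rfl)
  obtain ⟨v, hv, hv0⟩ : ∃ v, N v = 0 ∧ v ≠ 0 := by
    simpa [injective_iff_map_eq_zero] using hker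
  exact ⟨v, v.2, by simpa using hv0, by simpa [N, sub_eq_zero, τ, Subtype.ext_iff] using hv⟩

theorem ZMod.apply_eq_apply_zero_of_periodic_one {n : ℕ} [NeZero n] {α : Type*}
    {f : ZMod n → α} (hf : Function.Periodic f 1) (a : ZMod n) : f a = f 0 := by
  simpa using hf.nsmul a.val 0

theorem Matrix.SpecialLinearGroup.transvection_pow {ι F : Type*} [DecidableEq ι] [Fintype ι]
    [CommRing F] {i j : ι} (hij : i ≠ j) (b : F) (n : ℕ) :
    transvection hij b ^ n = transvection hij (n • b) := by
  induction n with
  | zero => simp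
  | succ n ih => rw [pow_succ, ih, ← transvection_add, succ_nsmul]

section PermutationModule

variable (K X : Type*) [Field K] [Fintype X]

def sumCoords : (X → K) →ₗ[K] K where
  toFun f := ∑ x, f x
  map_add' _ _ := Finset.sum_add_distrib
  map_smul' _ _ := (Finset.mul_sum _ _ _).symm

variable {K X}

@[simp]
theorem sumCoords_apply (f : X → K) : sumCoords K X f = ∑ x, f x := rfl

theorem isCompl_span_one_ker_sumCoords (h : (Fintype.card X : K) ≠ 0) :
    IsCompl (K ∙ (1 : X → K)) (LinearMap.ker (sumCoords K X)) := by
  have h1 : (1 : X → K) ∉ LinearMap.ker (sumCoords K X) := by simpa using h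
  refine (Submodule.isCompl_span_singleton_of_isCoatom_of_notMem
    (LinearMap.isCoatom_ker_of_surjective (LinearMap.surjective_of_ne_zero ?_)) h1).symm
  rintro h0
  exact h1 (by simp [h0])

theorem sum_smul_one_sub_single [DecidableEq X] (f : X → K) :
    ∑ y, f y • (1 - Pi.single y 1 : X → K) = (∑ y, f y) • 1 - f := by
  ext x
  simp [Finset.sum_apply, mul_sub, Pi.single_apply, Finset.sum_sub_distrib]

end PermutationModule

section PermutationRepresentation

variable (K G X : Type*) [Field K] [Group G] [MulAction G X]

def permFunRep : Representation K G (X → K) where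
  toFun g := LinearMap.funLeft K K (g⁻¹ • ·)
  map_one' := by ext; simp
  map_mul' g h := by ext; simp [mul_smul]

variable {K G X}

@[simp]
theorem permFunRep_apply (g : G) (f : X → K) (x : X) :
    permFunRep K G X g f x = f (g⁻¹ • x) := rfl

theorem permFunRep_of_mem_span_one {f : X → K} (hf : f ∈ K ∙ (1 : X → K)) (g : G) :
    permFunRep K G X g f = f := by
  obtain ⟨c, rfl⟩ := Submodule.mem_span_singleton.1 hf
  rfl

theorem permFunRep_one_sub_single [DecidableEq X] (g : G) (x : X) :
    permFunRep K G X g (1 - Pi.single x 1) = 1 - Pi.single (g • x) 1 := by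
  ext y
  simp [Pi.single_apply, inv_smul_eq_iff]

variable [Fintype X]

theorem sumCoords_permFunRep (g : G) (f : X → K) :
    sumCoords K X (permFunRep K G X g f) = sumCoords K X f :=
  Equiv.sum_comp (MulAction.toPerm g⁻¹) f

theorem ker_sumCoords_le_of_one_sub_single_mem [DecidableEq X] [MulAction.IsPretransitive G X]
    {W : Submodule K (X → K)} (hW : ∀ g, ∀ f ∈ W, permFunRep K G X g f ∈ W) {x₀ : X}
    (hx₀ : 1 - Pi.single x₀ 1 ∈ W) : LinearMap.ker (sumCoords K X) ≤ W := by
  have hmem (y : X) : (1 - Pi.single y 1 : X → K) ∈ W := by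
    obtain ⟨g, rfl⟩ := MulAction.exists_smul_eq G x₀ y
    simpa [permFunRep_one_sub_single] using hW g _ hx₀
  intro f hf
  have hf' : f = -∑ y, f y • (1 - Pi.single y 1 : X → K) := by
    rw [sum_smul_one_sub_single, show ∑ y, f y = 0 from hf]
    simp
  rw [hf']
  exact W.neg_mem (W.sum_mem fun y _ => W.smul_mem _ (hmem y))

end PermutationRepresentation

section ProjectiveLine

variable {K : Type} [Field K]

def affinePt (a : K) : ℙ K (Fin 2 → K) := mk K ![a, 1] (by simp)

def inftyPt : ℙ K (Fin 2 → K) := mk K ![1, 0] (by simp)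

abbrev shear (t : K) : SpecialLinearGroup (Fin 2) K :=
  SpecialLinearGroup.transvection (zero_ne_one : (0 : Fin 2) ≠ 1) t

theorem specialLinearGroup_smul_mk (g : SpecialLinearGroup (Fin 2) K) {v : Fin 2 → K}
    (hv : v ≠ 0) : g • mk K v hv = mk K (g • v) ((smul_ne_zero_iff_ne g).mpr hv) :=
  rfl

-- `sl2P1Action` is definitionally the library's action of `SpecialLinearGroup` on `ℙ K V`,
-- so the library's 2-transitivity applies to it.
instance : MulAction.IsPretransitive (SpecialLinearGroup (Fin 2) K) (ℙ K (Fin 2 → K)) :=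
  @MulAction.isPretransitive_of_is_two_pretransitive _ _ _ _
    Projectivization.instIsMultiplyPretransitiveSpecialLinearGroupForallOfNatNat

theorem card_projectiveLine [Fintype K] [Fintype (ℙ K (Fin 2 → K))] :
    Fintype.card (ℙ K (Fin 2 → K)) = Fintype.card K + 1 := by
  simpa [Nat.card_eq_fintype_card] using card_of_finrank_two K (Fin 2 → K) (by simp)

theorem inftyPt_ne_affinePt (a : K) : inftyPt ≠ affinePt a := by
  simp [inftyPt, affinePt, mk_eq_mk_iff']

theorem eq_inftyPt_or_exists_eq_affinePt (x : ℙ K (Fin 2 → K)) :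
    x = inftyPt ∨ ∃ a, x = affinePt a := by
  induction x using Projectivization.ind with
  | h v hv =>
    by_cases h1 : v 1 = 0
    · left
      refine (mk_eq_mk_iff' _ _ _ _ _).2 ⟨v 0, ?_⟩
      ext i; fin_cases i <;> simp [h1]
    · right
      refine ⟨v 0 / v 1, (mk_eq_mk_iff' _ _ _ _ _).2 ⟨v 1, ?_⟩⟩
      ext i; fin_cases i <;> simp [h1, mul_div_cancel₀]

theorem eq_smul_single_inftyPt_add_smul_of_forall_affinePt {R : Type*} [Ring R]
    [DecidableEq (ℙ K (Fin 2 → K))] {w : ℙ K (Fin 2 → K) → R} {c : R}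
    (hc : ∀ a, w (affinePt a) = c) :
    w = w inftyPt • Pi.single inftyPt 1 + c • (1 - Pi.single inftyPt 1) := by
  ext x
  rcases eq_inftyPt_or_exists_eq_affinePt x with rfl | ⟨a, rfl⟩
  · simp
  · simp [hc, (inftyPt_ne_affinePt a).symm]

theorem shear_smul_affinePt (t a : K) : shear t • affinePt a = affinePt (a + t) := by
  rw [affinePt, specialLinearGroup_smul_mk, affinePt]
  congr 1
  ext i
  fin_cases i <;> simp [shear, Matrix.SpecialLinearGroup.smul_def,
    SpecialLinearGroup.transvection_coe, mulVec, dotProduct, Fin.sum_univ_two]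

theorem shear_pow_char (p : ℕ) [CharP K p] : shear (1 : K) ^ p = 1 := by
  simp [shear, SpecialLinearGroup.transvection_pow]

end ProjectiveLine

theorem eq_bot_or_eq_ker_sumCoords_of_invariant {p : ℕ} [Fact p.Prime]
    [Fintype (ℙ (ZMod p) (Fin 2 → ZMod p))]
    {W : Submodule (ZMod p) (ℙ (ZMod p) (Fin 2 → ZMod p) → ZMod p)}
    (hWZ : W ≤ LinearMap.ker (sumCoords _ _))
    (hW : ∀ g, ∀ f ∈ W, permFunRep _ (SpecialLinearGroup (Fin 2) (ZMod p)) _ g f ∈ W) :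
    W = ⊥ ∨ W = LinearMap.ker (sumCoords _ _) := by
  classical
  refine or_iff_not_imp_left.2 fun hW0 => le_antisymm hWZ ?_
  set ρ := permFunRep (ZMod p) (SpecialLinearGroup (Fin 2) (ZMod p)) (ℙ (ZMod p) (Fin 2 → ZMod p))
  obtain ⟨w, hwW, hw0, hwfix⟩ :=
    Module.End.exists_ne_zero_mem_apply_eq_self_of_pow_eq_one (σ := ρ (shear 1)⁻¹)
      (by rw [← map_pow, inv_pow, shear_pow_char, inv_one, map_one]) (hW _) hW0
  have hconst (a : ZMod p) : w (affinePt a) = w (affinePt 0) :=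
    ZMod.apply_eq_apply_zero_of_periodic_one (f := w ∘ affinePt)
      (fun a => by simpa [ρ, shear_smul_affinePt] using congrFun hwfix (affinePt a)) a
  generalize w (affinePt 0) = c at hconst
  have hw := eq_smul_single_inftyPt_add_smul_of_forall_affinePt hconst
  -- the sum of `w` is `w ∞ + p • c`
  have hinf : w inftyPt = 0 := by
    have := hWZ hwW
    rw [hw, LinearMap.mem_ker, map_add, map_smul, map_smul] at this
    simpa [card_projectiveLine] using this
  have hc : c ≠ 0 := fun h => hw0 (by rw [hw, hinf, h]; simp)
  refine ker_sumCoords_le_of_one_sub_single_mem hW (x₀ := inftyPt) ?_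
  have := W.smul_mem c⁻¹ hwW
  rwa [hw, hinf, zero_smul, zero_add, smul_smul, inv_mul_cancel₀ hc, one_smul] at this

/-- For a prime `p ≥ 5`, the permutation module `F_p[P¹(F_p)]` has dimension
`p + 1` over `F_p`, and it is the direct sum of the `1`-dimensional trivial
representation (constant functions) and an irreducible `p`-dimensional
`SL₂(F_p)`-representation (zero-sum functions). -/
theorem perm_module_P1_dimension_decomposition (p : ℕ) [Fact p.Prime] :
    letI P1 := Projectivization (ZMod p) (Fin 2 → ZMod p)
    letI : Fintype P1 := Fintype.ofFinite P1
    letI T : Submodule (ZMod p) (P1 → ZMod p) :=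
      Submodule.span (ZMod p) {(fun _ => (1 : ZMod p) : P1 → ZMod p)}
    letI sumF : (P1 → ZMod p) →ₗ[ZMod p] ZMod p :=
      { toFun := fun f => ∑ x, f x
        map_add' := by intro f g; simp [Finset.sum_add_distrib]
        map_smul' := by intro c f; simp [Finset.mul_sum] }
    letI Z : Submodule (ZMod p) (P1 → ZMod p) := LinearMap.ker sumF
    Module.finrank (ZMod p) (P1 → ZMod p) = p + 1 ∧
      IsCompl T Z ∧
      Module.finrank (ZMod p) T = 1 ∧
      Module.finrank (ZMod p) Z = p ∧
      (∀ (g : Matrix.SpecialLinearGroup (Fin 2) (ZMod p)) (f : P1 → ZMod p),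
        f ∈ T → (fun x => f (g⁻¹ • x)) = f) ∧
      (∀ (g : Matrix.SpecialLinearGroup (Fin 2) (ZMod p)) (f : P1 → ZMod p),
        f ∈ Z → (fun x => f (g⁻¹ • x)) ∈ Z) ∧
      ∀ W : Submodule (ZMod p) (P1 → ZMod p), W ≤ Z →
        (∀ (g : Matrix.SpecialLinearGroup (Fin 2) (ZMod p)) (f : P1 → ZMod p),
          f ∈ W → (fun x => f (g⁻¹ • x)) ∈ W) →
        W = ⊥ ∨ W = Z := by
  let _ := Fintype.ofFinite (ℙ (ZMod p) (Fin 2 → ZMod p))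
  have hcard : Fintype.card (ℙ (ZMod p) (Fin 2 → ZMod p)) = p + 1 := by
    rw [card_projectiveLine, ZMod.card]
  have hdim : Module.finrank (ZMod p) (ℙ (ZMod p) (Fin 2 → ZMod p) → ZMod p) = p + 1 := by
    rw [Module.finrank_fintype_fun_eq_card, hcard]
  have hcompl := isCompl_span_one_ker_sumCoords (K := ZMod p) (X := ℙ (ZMod p) (Fin 2 → ZMod p))
    (by simp [hcard])
  have hT : Module.finrank (ZMod p) (ZMod p ∙ (1 : ℙ (ZMod p) (Fin 2 → ZMod p) → ZMod p)) = 1 :=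
    finrank_span_singleton one_ne_zero
  refine ⟨hdim, hcompl, hT, ?_, fun g f hf => permFunRep_of_mem_span_one hf g,
    fun g f hf => (sumCoords_permFunRep g f).trans hf,
    fun W hWZ hW => eq_bot_or_eq_ker_sumCoords_of_invariant hWZ hW⟩
  change Module.finrank (ZMod p) (LinearMap.ker (sumCoords (ZMod p) _)) = p
  have := Submodule.finrank_add_eq_of_isCompl hcompl
  omega
end
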